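/- (Singular Gronwall) Let f : (0,T] → [0,∞) be continuous with f(t) ≤ a·t^{β−1} + c·∫₀ᵗ (t−s)^{γ−1} f(s) ds for all t ∈ (0,T], where a, c ≥ 0, β ∈ (0,1], γ ∈ (0,1]. Then there exists a constant C = C(c, γ, β, T) such that f(t) ≤ C·a·t^{β−1} for all t ∈ (0,T]. -/

import Mathlib

/-!
Work with `h = f⁺` and the `ℝ≥0∞`-valued fractional integrals
`I^p h (t) = ∫₀ᵗ (t - s)^(p-1) h(s) ds`, so that the hypothesis reads `h ≤ a t^(β-1) + c I^γ h`.

*Integrability.* Weighted by `e^(-r s)`, the operator `c I^γ` has norm at most `c Γ(γ) r^(-γ)`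
on `L¹(0, t)`; for `r` large this is `≤ 1/2`, and absorbing gives `∫₀ᵗ h ≤ D a t^β` whenever
the left side is finite.

*Bootstrap.* The Beta-integral bound `I^p I^q ≤ K I^(p+q)` turns `I^p` of the hypothesis into
`I^p h ≤ K a t^(p+β-1) + K' I^(p+γ) h`. For `p ≥ 1` the kernel is bounded, so
`I^p h ≤ t^(p-1) ∫₀ᵗ h`; descending from there in steps of `γ` yields `I^γ h ≤ D a t^(γ+β-1)`,
which, put back into the hypothesis, is the claim.

If `∫₀ᵗ h = ∞` then `I^γ h (t) = ∞`, the Bochner integral in the hypothesis is `0`, and the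
claim holds at `t` with `C = 1`.
-/

open MeasureTheory Set Real
open scoped ENNReal

lemma integral_le_toReal_lintegral_ofReal {α : Type*} [MeasurableSpace α] {μ : Measure α}
    (f : α → ℝ) : ∫ x, f x ∂μ ≤ (∫⁻ x, ENNReal.ofReal (f x) ∂μ).toReal := by
  by_cases hf : Integrable f μ
  · rw [integral_eq_lintegral_pos_part_sub_lintegral_neg_part hf]
    exact sub_le_self _ ENNReal.toReal_nonneg
  · rw [integral_undef hf]
    exact ENNReal.toReal_nonneg

lemma ENNReal.le_two_mul_of_le_add_mul {x A ε : ℝ≥0∞} (hx : x ≠ ∞) (hε : ε ≤ 2⁻¹)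
    (h : x ≤ A + ε * x) : x ≤ 2 * A := by
  have hhalf : 2⁻¹ * x ≤ A := by
    refine ENNReal.le_of_add_le_add_right
      (ENNReal.mul_ne_top (ENNReal.inv_ne_top.mpr two_ne_zero) hx) ?_
    rw [← add_mul, ENNReal.inv_two_add_inv_two, one_mul]
    exact h.trans (add_le_add_right (mul_le_mul_left hε x) A)
  calc x = 2 * (2⁻¹ * x) := by
        rw [← mul_assoc, ENNReal.mul_inv_cancel two_ne_zero ENNReal.ofNat_ne_top, one_mul]
    _ ≤ 2 * A := mul_le_mul_right hhalf 2

lemma rpow_le_two_mul_rpow_of_half_le {p r x : ℝ} (hp : p ∈ Icc 0 1) (hr : 0 < r)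
    (hx : r / 2 ≤ x) : x ^ (p - 1) ≤ 2 * r ^ (p - 1) := by
  calc x ^ (p - 1) ≤ (r / 2) ^ (p - 1) :=
        rpow_le_rpow_of_nonpos (by positivity) hx (by linarith [hp.2])
    _ = (2 : ℝ) ^ (1 - p) * r ^ (p - 1) := by
      rw [div_rpow hr.le zero_le_two, div_eq_mul_inv, ← rpow_neg zero_le_two, neg_sub, mul_comm]
    _ ≤ 2 ^ (1 : ℝ) * r ^ (p - 1) := by
      gcongr
      exacts [one_le_two, by linarith [hp.1]]
    _ = 2 * r ^ (p - 1) := by rw [rpow_one]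

lemma rpow_add_le_rpow_mul_rpow {t T γ x : ℝ} (ht : t ∈ Ioc 0 T) (hγ : 0 ≤ γ) :
    t ^ (γ + x) ≤ T ^ γ * t ^ x := by
  rw [rpow_add ht.1]
  exact mul_le_mul_of_nonneg_right (rpow_le_rpow ht.1.le ht.2 hγ) (rpow_nonneg ht.1.le _)

section PowerIntegrals

variable {p q r s t : ℝ}

lemma lintegral_Ioo_sub_rpow (hq : 0 < q) (hst : s ≤ t) :
    ∫⁻ u in Ioo s t, ENNReal.ofReal ((u - s) ^ (q - 1)) = ENNReal.ofReal ((t - s) ^ q / q) := by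
  have hint : IntervalIntegrable (fun u => (u - s) ^ (q - 1)) volume s t := by
    simpa using (intervalIntegral.intervalIntegrable_rpow' (a := s - s) (b := t - s)
      (by linarith : -1 < q - 1)).comp_sub_right s
  have hnn : 0 ≤ᵐ[volume.restrict (Ioo s t)] fun u => (u - s) ^ (q - 1) :=
    (ae_restrict_iff' measurableSet_Ioo).mpr (ae_of_all _ fun u hu =>
      rpow_nonneg (sub_nonneg.mpr hu.1.le) _)
  rw [← ofReal_integral_eq_lintegral_ofReal
    ((intervalIntegrable_iff_integrableOn_Ioo_of_le hst).mp hint) hnn,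
    ← integral_Ioc_eq_integral_Ioo, ← intervalIntegral.integral_of_le hst,
    intervalIntegral.integral_comp_sub_right (fun x => x ^ (q - 1)),
    integral_rpow (Or.inl (by linarith)), sub_self, sub_add_cancel, zero_rpow hq.ne']
  simp

lemma lintegral_Ioo_rsub_rpow (hp : 0 < p) (hst : s ≤ t) :
    ∫⁻ u in Ioo s t, ENNReal.ofReal ((t - u) ^ (p - 1)) = ENNReal.ofReal ((t - s) ^ p / p) := by
  have hint : IntervalIntegrable (fun u => (t - u) ^ (p - 1)) volume s t := by
    simpa using (intervalIntegral.intervalIntegrable_rpow' (a := t - s) (b := t - t)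
      (by linarith : -1 < p - 1)).comp_sub_left t
  have hnn : 0 ≤ᵐ[volume.restrict (Ioo s t)] fun u => (t - u) ^ (p - 1) :=
    (ae_restrict_iff' measurableSet_Ioo).mpr (ae_of_all _ fun u hu =>
      rpow_nonneg (sub_nonneg.mpr hu.2.le) _)
  rw [← ofReal_integral_eq_lintegral_ofReal
    ((intervalIntegrable_iff_integrableOn_Ioo_of_le hst).mp hint) hnn,
    ← integral_Ioc_eq_integral_Ioo, ← intervalIntegral.integral_of_le hst,
    intervalIntegral.integral_comp_sub_left (fun x => x ^ (p - 1)),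
    integral_rpow (Or.inl (by linarith)), sub_self, sub_add_cancel, zero_rpow hp.ne']
  simp

lemma lintegral_rsub_rpow_mul_sub_rpow_le (hp : p ∈ Ioc 0 1) (hq : q ∈ Ioc 0 1) (hst : s < t) :
    ∫⁻ u in Ioo s t, ENNReal.ofReal ((t - u) ^ (p - 1)) * ENNReal.ofReal ((u - s) ^ (q - 1)) ≤
      ENNReal.ofReal ((2 / p + 2 / q) * (t - s) ^ (p + q - 1)) := by
  set r := t - s
  have hr : 0 < r := sub_pos.mpr hst
  -- one of `t - u`, `u - s` is at least `r / 2`, and there its power is at most `2 r^(· - 1)`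
  have hsplit : ∀ u ∈ Ioo s t,
      ENNReal.ofReal ((t - u) ^ (p - 1)) * ENNReal.ofReal ((u - s) ^ (q - 1)) ≤
        ENNReal.ofReal (2 * r ^ (p - 1)) * ENNReal.ofReal ((u - s) ^ (q - 1)) +
          ENNReal.ofReal (2 * r ^ (q - 1)) * ENNReal.ofReal ((t - u) ^ (p - 1)) := by
    intro u _
    rcases le_total (r / 2) (t - u) with hu | hu
    · refine le_add_right (mul_le_mul_left (ENNReal.ofReal_le_ofReal ?_) _)
      exact rpow_le_two_mul_rpow_of_half_le (Ioc_subset_Icc_self hp) hr hu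
    · refine le_add_left ((mul_comm _ _).trans_le
        (mul_le_mul_left (ENNReal.ofReal_le_ofReal ?_) _))
      exact rpow_le_two_mul_rpow_of_half_le (Ioc_subset_Icc_self hq) hr (by linarith)
  have hid : 2 * r ^ (p - 1) * (r ^ q / q) + 2 * r ^ (q - 1) * (r ^ p / p) =
      (2 / p + 2 / q) * r ^ (p + q - 1) := by
    have h1 : r ^ (p - 1) * r ^ q = r ^ (p + q - 1) := by rw [← rpow_add hr]; ring_nf
    have h2 : r ^ (q - 1) * r ^ p = r ^ (p + q - 1) := by rw [← rpow_add hr]; ring_nf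
    linear_combination (2 / q) * h1 + (2 / p) * h2
  calc _ ≤ _ := setLIntegral_mono' measurableSet_Ioo hsplit
    _ = ENNReal.ofReal (2 * r ^ (p - 1)) * ENNReal.ofReal (r ^ q / q) +
          ENNReal.ofReal (2 * r ^ (q - 1)) * ENNReal.ofReal (r ^ p / p) := by
      rw [lintegral_add_left (by fun_prop), lintegral_const_mul' _ _ ENNReal.ofReal_ne_top,
        lintegral_const_mul' _ _ ENNReal.ofReal_ne_top, lintegral_Ioo_sub_rpow hq.1 hst.le,
        lintegral_Ioo_rsub_rpow hp.1 hst.le]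
    _ = _ := by
      have := rpow_nonneg hr.le (p - 1)
      have := rpow_nonneg hr.le (q - 1)
      have := hp.1; have := hq.1
      rw [← ENNReal.ofReal_mul (by positivity), ← ENNReal.ofReal_mul (by positivity),
        ← ENNReal.ofReal_add (by positivity) (by positivity), hid]

lemma lintegral_Ioi_rpow_mul_exp_neg_mul (hq : 0 < q) (hr : 0 < r) :
    ∫⁻ v in Ioi 0, ENNReal.ofReal (v ^ (q - 1) * exp (-(r * v))) =
      ENNReal.ofReal ((1 / r) ^ q * Gamma q) := by
  have hval := integral_rpow_mul_exp_neg_mul_Ioi hq hr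
  have hint : IntegrableOn (fun v => v ^ (q - 1) * exp (-(r * v))) (Ioi 0) :=
    Integrable.of_integral_ne_zero
      (by rw [hval]; exact (mul_pos (by positivity) (Gamma_pos_of_pos hq)).ne')
  rw [← hval, ofReal_integral_eq_lintegral_ofReal hint ((ae_restrict_iff' measurableSet_Ioi).mpr
    (ae_of_all _ fun v hv => mul_nonneg (rpow_nonneg (le_of_lt hv) _) (exp_pos _).le))]

lemma lintegral_exp_mul_sub_rpow_le (hq : 0 < q) (hr : 0 < r) :
    ∫⁻ u in Ioo s t, ENNReal.ofReal (exp (-(r * u))) * ENNReal.ofReal ((u - s) ^ (q - 1)) ≤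
      ENNReal.ofReal (exp (-(r * s))) * ENNReal.ofReal ((1 / r) ^ q * Gamma q) := by
  set φ : ℝ → ℝ≥0∞ := fun v => ENNReal.ofReal (v ^ (q - 1) * exp (-(r * v)))
  have hfactor : ∀ u, ENNReal.ofReal (exp (-(r * u))) * ENNReal.ofReal ((u - s) ^ (q - 1)) =
      ENNReal.ofReal (exp (-(r * s))) * φ (u - s) := by
    intro u
    rw [← ENNReal.ofReal_mul (exp_pos _).le, ← ENNReal.ofReal_mul (exp_pos _).le,
      show -(r * u) = -(r * s) + -(r * (u - s)) by ring, exp_add]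
    ring_nf
  have hshift : ∫⁻ u in Ioi s, φ (u - s) = ∫⁻ v in Ioi 0, φ v := by
    rw [← lintegral_indicator measurableSet_Ioi, ← lintegral_indicator measurableSet_Ioi,
      ← lintegral_sub_right_eq_self ((Ioi 0).indicator φ) s]
    congr with u
    simp [indicator_apply]
  simp_rw [hfactor]
  rw [lintegral_const_mul' _ _ ENNReal.ofReal_ne_top, ← lintegral_Ioi_rpow_mul_exp_neg_mul hq hr,
    ← hshift]
  gcongr
  exact Ioo_subset_Ioi_self

end PowerIntegrals

/-- The Riemann–Liouville integral of order `p`, without the normalising factor `1 / Γ(p)`. -/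
noncomputable def riemannLiouville (p : ℝ) (h : ℝ → ℝ≥0∞) (t : ℝ) : ℝ≥0∞ :=
  ∫⁻ s in Ioo 0 t, ENNReal.ofReal ((t - s) ^ (p - 1)) * h s

section RiemannLiouville

variable {p q r t : ℝ} {h : ℝ → ℝ≥0∞}

lemma riemannLiouville_add {f g : ℝ → ℝ≥0∞} (hf : Measurable f) :
    riemannLiouville p (fun u => f u + g u) t =
      riemannLiouville p f t + riemannLiouville p g t := by
  simp only [riemannLiouville, mul_add]
  exact lintegral_add_left (by fun_prop) _

lemma riemannLiouville_const_mul {C : ℝ≥0∞} {f : ℝ → ℝ≥0∞} (hC : C ≠ ∞) :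
    riemannLiouville p (fun u => C * f u) t = C * riemannLiouville p f t := by
  simp only [riemannLiouville, mul_left_comm _ C]
  exact lintegral_const_mul' _ _ hC

lemma riemannLiouville_le_rpow_mul_lintegral (hp : 1 ≤ p) :
    riemannLiouville p h t ≤ ENNReal.ofReal (t ^ (p - 1)) * ∫⁻ s in Ioo 0 t, h s := by
  rw [riemannLiouville, ← lintegral_const_mul' _ _ ENNReal.ofReal_ne_top]
  refine setLIntegral_mono' measurableSet_Ioo fun s hs => mul_le_mul_left ?_ _
  exact ENNReal.ofReal_le_ofReal
    (rpow_le_rpow (by linarith [hs.2]) (by linarith [hs.1]) (by linarith))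

lemma rpow_mul_lintegral_le_riemannLiouville (hp : p ≤ 1) :
    ENNReal.ofReal (t ^ (p - 1)) * ∫⁻ s in Ioo 0 t, h s ≤ riemannLiouville p h t := by
  rw [riemannLiouville, ← lintegral_const_mul' _ _ ENNReal.ofReal_ne_top]
  refine setLIntegral_mono' measurableSet_Ioo fun s hs => mul_le_mul_left ?_ _
  exact ENNReal.ofReal_le_ofReal
    (rpow_le_rpow_of_nonpos (by linarith [hs.2]) (by linarith [hs.1]) (by linarith))

lemma lintegral_mul_riemannLiouville {w : ℝ → ℝ≥0∞} (hh : Measurable h) (hw : Measurable w) :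
    ∫⁻ u in Ioo 0 t, w u * riemannLiouville q h u =
      ∫⁻ s in Ioo 0 t, (∫⁻ u in Ioo s t, w u * ENNReal.ofReal ((u - s) ^ (q - 1))) * h s := by
  set g : ℝ → ℝ → ℝ≥0∞ := fun u s =>
    if s < u then w u * ENNReal.ofReal ((u - s) ^ (q - 1)) * h s else 0
  have hg : Measurable (Function.uncurry g) :=
    Measurable.ite (measurableSet_lt measurable_snd measurable_fst) (by fun_prop) measurable_const
  have hslice_u : ∀ u ∈ Ioo 0 t, w u * riemannLiouville q h u = ∫⁻ s in Ioo 0 t, g u s := by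
    intro u hu
    have hset : Iio u ∩ Ioo 0 t = Ioo 0 u := by
      ext x; simp only [mem_inter_iff, mem_Iio, mem_Ioo]; constructor
      · rintro ⟨hxu, hx0, -⟩; exact ⟨hx0, hxu⟩
      · rintro ⟨hx0, hxu⟩; exact ⟨hxu, hx0, hxu.trans hu.2⟩
    rw [show g u = (Iio u).indicator fun s => w u * ENNReal.ofReal ((u - s) ^ (q - 1)) * h s by
        ext s; simp [g, indicator_apply],
      lintegral_indicator measurableSet_Iio, Measure.restrict_restrict measurableSet_Iio, hset,
      riemannLiouville, ← lintegral_const_mul _ (by fun_prop)]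
    simp only [mul_assoc]
  have hslice_s : ∀ s ∈ Ioo 0 t,
      (∫⁻ u in Ioo s t, w u * ENNReal.ofReal ((u - s) ^ (q - 1))) * h s =
        ∫⁻ u in Ioo 0 t, g u s := by
    intro s hs
    have hset : Ioi s ∩ Ioo 0 t = Ioo s t := by
      ext x; simp only [mem_inter_iff, mem_Ioi, mem_Ioo]; constructor
      · rintro ⟨hsx, -, hxt⟩; exact ⟨hsx, hxt⟩
      · rintro ⟨hsx, hxt⟩; exact ⟨hsx, hs.1.trans hsx, hxt⟩
    rw [show (fun u => g u s) =
          (Ioi s).indicator fun u => w u * ENNReal.ofReal ((u - s) ^ (q - 1)) * h s by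
        ext u; simp [g, indicator_apply],
      lintegral_indicator measurableSet_Ioi, Measure.restrict_restrict measurableSet_Ioi, hset,
      lintegral_mul_const _ (by fun_prop)]
  rw [setLIntegral_congr_fun measurableSet_Ioo hslice_u, lintegral_lintegral_swap hg.aemeasurable,
    setLIntegral_congr_fun measurableSet_Ioo hslice_s]

lemma riemannLiouville_riemannLiouville_le (hp : p ∈ Ioc 0 1) (hq : q ∈ Ioc 0 1)
    (hh : Measurable h) :
    riemannLiouville p (riemannLiouville q h) t ≤
      ENNReal.ofReal (2 / p + 2 / q) * riemannLiouville (p + q) h t := by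
  rw [riemannLiouville, lintegral_mul_riemannLiouville hh (by fun_prop), riemannLiouville,
    ← lintegral_const_mul' _ _ ENNReal.ofReal_ne_top]
  refine setLIntegral_mono' measurableSet_Ioo fun s hs => ?_
  have := hp.1; have := hq.1
  rw [← mul_assoc, ← ENNReal.ofReal_mul (by positivity)]
  exact mul_le_mul_left (lintegral_rsub_rpow_mul_sub_rpow_le hp hq hs.2) _

lemma riemannLiouville_rpow_le (hp : p ∈ Ioc 0 1) (hq : q ∈ Ioc 0 1) (ht : 0 < t) :
    riemannLiouville p (fun u => ENNReal.ofReal (u ^ (q - 1))) t ≤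
      ENNReal.ofReal ((2 / p + 2 / q) * t ^ (p + q - 1)) := by
  simpa [riemannLiouville] using lintegral_rsub_rpow_mul_sub_rpow_le hp hq ht

lemma lintegral_exp_mul_riemannLiouville_le (hq : 0 < q) (hr : 0 < r) (hh : Measurable h) :
    ∫⁻ u in Ioo 0 t, ENNReal.ofReal (exp (-(r * u))) * riemannLiouville q h u ≤
      ENNReal.ofReal ((1 / r) ^ q * Gamma q) *
        ∫⁻ s in Ioo 0 t, ENNReal.ofReal (exp (-(r * s))) * h s := by
  rw [lintegral_mul_riemannLiouville hh (by fun_prop),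
    ← lintegral_const_mul' _ _ ENNReal.ofReal_ne_top]
  refine setLIntegral_mono' measurableSet_Ioo fun s _ => ?_
  rw [← mul_assoc, mul_comm _ (ENNReal.ofReal (exp _))]
  exact mul_le_mul_left (lintegral_exp_mul_sub_rpow_le hq hr) _

end RiemannLiouville

section Gronwall

variable {T a c β γ : ℝ} {h : ℝ → ℝ≥0∞}

lemma lintegral_exp_mul_le_of_le_add_riemannLiouville {r t : ℝ} (hh : Measurable h)
    (ha : 0 ≤ a) (hβ : 0 < β) (hγ : 0 < γ) (hr : 0 < r)
    (hle : ∀ u ∈ Ioc 0 T,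
      h u ≤ ENNReal.ofReal (a * u ^ (β - 1)) + ENNReal.ofReal c * riemannLiouville γ h u)
    (ht : t ∈ Ioc 0 T) :
    ∫⁻ s in Ioo 0 t, ENNReal.ofReal (exp (-(r * s))) * h s ≤ ENNReal.ofReal (a * (t ^ β / β)) +
      ENNReal.ofReal c * ENNReal.ofReal ((1 / r) ^ γ * Gamma γ) *
        ∫⁻ s in Ioo 0 t, ENNReal.ofReal (exp (-(r * s))) * h s := by
  have hpow : ∫⁻ s in Ioo 0 t, ENNReal.ofReal (a * s ^ (β - 1)) =
      ENNReal.ofReal (a * (t ^ β / β)) := by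
    simp_rw [ENNReal.ofReal_mul ha]
    rw [lintegral_const_mul' _ _ ENNReal.ofReal_ne_top]
    simpa using congrArg (ENNReal.ofReal a * ·) (lintegral_Ioo_sub_rpow hβ ht.1.le)
  calc _ ≤ ∫⁻ s in Ioo 0 t, (ENNReal.ofReal (a * s ^ (β - 1)) + ENNReal.ofReal c *
        (ENNReal.ofReal (exp (-(r * s))) * riemannLiouville γ h s)) := by
        refine setLIntegral_mono' measurableSet_Ioo fun s hs => ?_
        have he : ENNReal.ofReal (exp (-(r * s))) ≤ 1 :=
          ENNReal.ofReal_le_one.mpr (exp_le_one_iff.mpr (by nlinarith [hs.1]))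
        calc _ ≤ ENNReal.ofReal (exp (-(r * s))) * (ENNReal.ofReal (a * s ^ (β - 1)) +
              ENNReal.ofReal c * riemannLiouville γ h s) :=
              mul_le_mul_right (hle s ⟨hs.1, hs.2.le.trans ht.2⟩) _
          _ ≤ _ := by
              rw [mul_add, mul_left_comm]
              exact add_le_add_left (mul_le_of_le_one_left zero_le he) _
    _ = ENNReal.ofReal (a * (t ^ β / β)) + ENNReal.ofReal c *
        ∫⁻ u in Ioo 0 t, ENNReal.ofReal (exp (-(r * u))) * riemannLiouville γ h u := by
        rw [lintegral_add_left (by fun_prop), lintegral_const_mul' _ _ ENNReal.ofReal_ne_top, hpow]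
    _ ≤ _ := by
        rw [mul_assoc]
        exact add_le_add_right
          (mul_le_mul_right (lintegral_exp_mul_riemannLiouville_le hγ hr hh) _) _

lemma lintegral_le_of_le_add_riemannLiouville (hh : Measurable h) (ha : 0 ≤ a) (hc : 0 ≤ c)
    (hβ : 0 < β) (hγ : 0 < γ)
    (hle : ∀ u ∈ Ioc 0 T,
      h u ≤ ENNReal.ofReal (a * u ^ (β - 1)) + ENNReal.ofReal c * riemannLiouville γ h u) :
    ∃ D, 0 ≤ D ∧ ∀ t ∈ Ioc 0 T, ∫⁻ s in Ioo 0 t, h s ≠ ∞ →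
      ∫⁻ s in Ioo 0 t, h s ≤ ENNReal.ofReal (D * a * t ^ β) := by
  have hΓ := Gamma_pos_of_pos hγ
  -- chosen so that `c Γ(γ) r^(-γ) ≤ 1/2`
  set r := (2 * c * Gamma γ + 1) ^ γ⁻¹
  have hr : 0 < r := by positivity
  have hcontract : ENNReal.ofReal c * ENNReal.ofReal ((1 / r) ^ γ * Gamma γ) ≤ 2⁻¹ := by
    have hrγ : (1 / r) ^ γ = (2 * c * Gamma γ + 1)⁻¹ := by
      rw [one_div, inv_rpow hr.le, ← rpow_mul (by positivity), inv_mul_cancel₀ hγ.ne', rpow_one]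
    rw [← ENNReal.ofReal_mul hc, hrγ, ← ENNReal.ofReal_ofNat 2,
      ← ENNReal.ofReal_inv_of_pos two_pos]
    refine ENNReal.ofReal_le_ofReal ?_
    rw [inv_mul_eq_div, mul_div_assoc', div_le_iff₀ (by positivity)]
    linarith
  refine ⟨2 * exp (r * T) / β, by positivity, fun t ht hfin => ?_⟩
  set G := ∫⁻ s in Ioo 0 t, ENNReal.ofReal (exp (-(r * s))) * h s
  have hGF : G ≤ ∫⁻ s in Ioo 0 t, h s := by
    refine setLIntegral_mono' measurableSet_Ioo fun s hs => mul_le_of_le_one_left zero_le ?_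
    exact ENNReal.ofReal_le_one.mpr (exp_le_one_iff.mpr (by nlinarith [hs.1]))
  have hG : G ≤ 2 * ENNReal.ofReal (a * (t ^ β / β)) :=
    ENNReal.le_two_mul_of_le_add_mul (ne_top_of_le_ne_top hfin hGF) hcontract
      (lintegral_exp_mul_le_of_le_add_riemannLiouville hh ha hβ hγ hr hle ht)
  calc ∫⁻ s in Ioo 0 t, h s ≤ ENNReal.ofReal (exp (r * T)) * G := by
        rw [← lintegral_const_mul' _ _ ENNReal.ofReal_ne_top]
        refine setLIntegral_mono' measurableSet_Ioo fun s hs => ?_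
        rw [← mul_assoc, ← ENNReal.ofReal_mul (exp_pos _).le, ← exp_add]
        refine le_mul_of_one_le_left zero_le (ENNReal.one_le_ofReal.mpr (one_le_exp ?_))
        nlinarith [hs.2, ht.2]
    _ ≤ ENNReal.ofReal (exp (r * T)) * (2 * ENNReal.ofReal (a * (t ^ β / β))) :=
        mul_le_mul_right hG _
    _ = ENNReal.ofReal (2 * exp (r * T) / β * a * t ^ β) := by
        rw [← ENNReal.ofReal_ofNat 2, ← ENNReal.ofReal_mul zero_le_two,
          ← ENNReal.ofReal_mul (exp_pos _).le]
        ring_nf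

lemma riemannLiouville_le_of_riemannLiouville_add_le {p t D : ℝ} (hh : Measurable h)
    (ha : 0 ≤ a) (hc : 0 ≤ c) (hp : p ∈ Ioc 0 1) (hβ : β ∈ Ioc 0 1) (hγ : γ ∈ Ioc 0 1)
    (hle : ∀ u ∈ Ioc 0 T,
      h u ≤ ENNReal.ofReal (a * u ^ (β - 1)) + ENNReal.ofReal c * riemannLiouville γ h u)
    (ht : t ∈ Ioc 0 T) (hD : 0 ≤ D)
    (hbound : riemannLiouville (p + γ) h t ≤ ENNReal.ofReal (D * a * t ^ (p + γ + β - 1))) :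
    riemannLiouville p h t ≤ ENNReal.ofReal
      ((2 / p + 2 / β + c * (2 / p + 2 / γ) * D * T ^ γ) * a * t ^ (p + β - 1)) := by
  have := hp.1; have := hβ.1; have := hγ.1
  have := rpow_nonneg ht.1.le (p + β - 1)
  have := rpow_nonneg ht.1.le (p + γ + β - 1)
  have hYX : t ^ (p + γ + β - 1) ≤ T ^ γ * t ^ (p + β - 1) := by
    rw [show p + γ + β - 1 = γ + (p + β - 1) by ring]
    exact rpow_add_le_rpow_mul_rpow ht hγ.1.le
  calc riemannLiouville p h t
      ≤ riemannLiouville p (fun u => ENNReal.ofReal a * ENNReal.ofReal (u ^ (β - 1)) +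
          ENNReal.ofReal c * riemannLiouville γ h u) t := by
        refine setLIntegral_mono' measurableSet_Ioo fun u hu => mul_le_mul_right ?_ _
        dsimp only
        rw [← ENNReal.ofReal_mul ha]
        exact hle u ⟨hu.1, hu.2.le.trans ht.2⟩
    _ = ENNReal.ofReal a * riemannLiouville p (fun u => ENNReal.ofReal (u ^ (β - 1))) t +
          ENNReal.ofReal c * riemannLiouville p (riemannLiouville γ h) t := by
        rw [riemannLiouville_add (by fun_prop), riemannLiouville_const_mul ENNReal.ofReal_ne_top,
          riemannLiouville_const_mul ENNReal.ofReal_ne_top]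
    _ ≤ ENNReal.ofReal a * ENNReal.ofReal ((2 / p + 2 / β) * t ^ (p + β - 1)) +
          ENNReal.ofReal c * (ENNReal.ofReal (2 / p + 2 / γ) *
            ENNReal.ofReal (D * a * t ^ (p + γ + β - 1))) := by
        gcongr
        · exact riemannLiouville_rpow_le hp hβ ht.1
        · exact (riemannLiouville_riemannLiouville_le hp hγ hh).trans (mul_le_mul_right hbound _)
    _ = ENNReal.ofReal (a * ((2 / p + 2 / β) * t ^ (p + β - 1)) +
          c * ((2 / p + 2 / γ) * (D * a * t ^ (p + γ + β - 1)))) := by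
        rw [← ENNReal.ofReal_mul ha, ← ENNReal.ofReal_mul (by positivity), ← ENNReal.ofReal_mul hc,
          ← ENNReal.ofReal_add (by positivity) (by positivity)]
    _ ≤ _ := by
        refine ENNReal.ofReal_le_ofReal ?_
        have := mul_le_mul_of_nonneg_left hYX (by positivity : 0 ≤ c * (2 / p + 2 / γ) * D * a)
        linarith

lemma riemannLiouville_le_of_le_add {p : ℝ} (hT : 0 ≤ T) (hh : Measurable h) (ha : 0 ≤ a)
    (hc : 0 ≤ c) (hβ : β ∈ Ioc 0 1) (hγ : γ ∈ Ioc 0 1)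
    (hle : ∀ u ∈ Ioc 0 T,
      h u ≤ ENNReal.ofReal (a * u ^ (β - 1)) + ENNReal.ofReal c * riemannLiouville γ h u)
    (hp : 0 < p) :
    ∃ D, 0 ≤ D ∧ ∀ t ∈ Ioc 0 T, ∫⁻ s in Ioo 0 t, h s ≠ ∞ →
      riemannLiouville p h t ≤ ENNReal.ofReal (D * a * t ^ (p + β - 1)) := by
  obtain ⟨D₀, hD₀, hF⟩ := lintegral_le_of_le_add_riemannLiouville hh ha hc hβ.1 hγ.1 hle
  have hbase : ∀ p, 1 ≤ p → ∃ D, 0 ≤ D ∧ ∀ t ∈ Ioc 0 T, ∫⁻ s in Ioo 0 t, h s ≠ ∞ →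
      riemannLiouville p h t ≤ ENNReal.ofReal (D * a * t ^ (p + β - 1)) := by
    refine fun p hp => ⟨D₀, hD₀, fun t ht hfin => ?_⟩
    calc riemannLiouville p h t
        ≤ ENNReal.ofReal (t ^ (p - 1)) * ENNReal.ofReal (D₀ * a * t ^ β) :=
          (riemannLiouville_le_rpow_mul_lintegral hp).trans (mul_le_mul_right (hF t ht hfin) _)
      _ = _ := by
          rw [← ENNReal.ofReal_mul (rpow_nonneg ht.1.le _), show p + β - 1 = p - 1 + β by ring,
            rpow_add ht.1]
          ring_nf
  have hdescend : ∀ n : ℕ, ∀ p, 0 < p → 1 ≤ p + n * γ → ∃ D, 0 ≤ D ∧ ∀ t ∈ Ioc 0 T,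
      ∫⁻ s in Ioo 0 t, h s ≠ ∞ →
        riemannLiouville p h t ≤ ENNReal.ofReal (D * a * t ^ (p + β - 1)) := by
    intro n
    induction n with
    | zero => exact fun p _ hp1 => hbase p (by simpa using hp1)
    | succ n ih =>
      intro p hp hpn
      rcases le_or_gt 1 p with hp1 | hp1
      · exact hbase p hp1
      obtain ⟨D, hD, hbound⟩ := ih (p + γ) (by linarith [hγ.1]) (by push_cast at hpn; linarith)
      have := hβ.1; have := hγ.1; have := rpow_nonneg hT γ
      exact ⟨2 / p + 2 / β + c * (2 / p + 2 / γ) * D * T ^ γ, by positivity, fun t ht hfin =>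
        riemannLiouville_le_of_riemannLiouville_add_le hh ha hc ⟨hp, hp1.le⟩ hβ hγ hle ht hD
          (hbound t ht hfin)⟩
  obtain ⟨n, hn⟩ := exists_nat_ge γ⁻¹
  refine hdescend n p hp ?_
  have := (inv_le_iff_one_le_mul₀ hγ.1).mp hn
  linarith

lemma toReal_riemannLiouville_le_of_le_add (hT : 0 ≤ T) (hh : Measurable h) (ha : 0 ≤ a)
    (hc : 0 ≤ c) (hβ : β ∈ Ioc 0 1) (hγ : γ ∈ Ioc 0 1)
    (hle : ∀ u ∈ Ioc 0 T,
      h u ≤ ENNReal.ofReal (a * u ^ (β - 1)) + ENNReal.ofReal c * riemannLiouville γ h u) :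
    ∃ D, 0 ≤ D ∧ ∀ t ∈ Ioc 0 T, (riemannLiouville γ h t).toReal ≤ D * a * t ^ (β - 1) := by
  obtain ⟨D, hD, hbound⟩ := riemannLiouville_le_of_le_add hT hh ha hc hβ hγ hle hγ.1
  refine ⟨D * T ^ γ, mul_nonneg hD (rpow_nonneg hT γ), fun t ht => ?_⟩
  have := rpow_nonneg ht.1.le (β - 1)
  by_cases hfin : ∫⁻ s in Ioo 0 t, h s = ∞
  · -- the `toReal` of the then infinite integral is the junk value `0`
    have htop : riemannLiouville γ h t = ∞ := by
      refine top_le_iff.mp ((rpow_mul_lintegral_le_riemannLiouville hγ.2).trans' ?_)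
      rw [hfin, ENNReal.mul_top (by simpa using rpow_pos_of_pos ht.1 _)]
    rw [htop, ENNReal.toReal_top]
    positivity
  calc (riemannLiouville γ h t).toReal ≤ D * a * t ^ (γ + (β - 1)) :=
        ENNReal.toReal_le_of_le_ofReal (mul_nonneg (mul_nonneg hD ha) (rpow_nonneg ht.1.le _))
          ((hbound t ht hfin).trans_eq (by rw [add_sub_assoc]))
    _ ≤ D * a * (T ^ γ * t ^ (β - 1)) := by
        gcongr
        exact rpow_add_le_rpow_mul_rpow ht hγ.1.le
    _ = D * T ^ γ * a * t ^ (β - 1) := by ring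

end Gronwall

theorem singular_gronwall_general (T a c β γ : ℝ) (f : ℝ → ℝ) (hT : 0 < T)
    (ha : 0 ≤ a) (hc : 0 ≤ c) (hβ : β ∈ Set.Ioc (0 : ℝ) 1) (hγ : γ ∈ Set.Ioc (0 : ℝ) 1)
    (hcont : ContinuousOn f (Set.Ioc 0 T))
    (hineq : ∀ t ∈ Set.Ioc (0 : ℝ) T,
      f t ≤ a * t ^ (β - 1) + c * ∫ s in Set.Ioo (0 : ℝ) t, (t - s) ^ (γ - 1) * f s) :
    ∃ C : ℝ, 0 < C ∧ ∀ t ∈ Set.Ioc (0 : ℝ) T, f t ≤ C * a * t ^ (β - 1) := by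
  set h : ℝ → ℝ≥0∞ := fun s => ENNReal.ofReal ((Ioc 0 T).indicator f s)
  have hh : Measurable h := by
    have := hcont.measurable_piecewise (g := 0) continuousOn_const measurableSet_Ioc
    rw [piecewise_eq_indicator] at this
    exact this.ennreal_ofReal
  have hintegral : ∀ t ∈ Ioc 0 T,
      ∫ s in Ioo 0 t, (t - s) ^ (γ - 1) * f s ≤ (riemannLiouville γ h t).toReal := by
    refine fun t ht => (integral_le_toReal_lintegral_ofReal _).trans_eq
      (congrArg _ (setLIntegral_congr_fun measurableSet_Ioo fun s hs => ?_))
    simp only [h, indicator_of_mem (show s ∈ Ioc 0 T from ⟨hs.1, hs.2.le.trans ht.2⟩),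
      ENNReal.ofReal_mul (rpow_nonneg (sub_nonneg.mpr hs.2.le) _)]
  have hle : ∀ u ∈ Ioc 0 T,
      h u ≤ ENNReal.ofReal (a * u ^ (β - 1)) + ENNReal.ofReal c * riemannLiouville γ h u := by
    intro u hu
    calc h u = ENNReal.ofReal (f u) := by simp only [h, indicator_of_mem hu]
      _ ≤ ENNReal.ofReal (a * u ^ (β - 1) + c * (riemannLiouville γ h u).toReal) :=
          ENNReal.ofReal_le_ofReal ((hineq u hu).trans (by gcongr; exact hintegral u hu))
      _ ≤ _ := by
          refine ENNReal.ofReal_add_le.trans (add_le_add_right ?_ _)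
          rw [ENNReal.ofReal_mul hc]
          exact mul_le_mul_right ENNReal.ofReal_toReal_le _
  obtain ⟨D, hD, hbound⟩ := toReal_riemannLiouville_le_of_le_add hT.le hh ha hc hβ hγ hle
  refine ⟨1 + c * D, by positivity, fun t ht => ?_⟩
  calc f t ≤ a * t ^ (β - 1) + c * (riemannLiouville γ h t).toReal :=
        (hineq t ht).trans (by gcongr; exact hintegral t ht)
    _ ≤ a * t ^ (β - 1) + c * (D * a * t ^ (β - 1)) := by gcongr; exact hbound t ht
    _ = (1 + c * D) * a * t ^ (β - 1) := by ring

theorem singular_gronwall (T a c β γ : ℝ) (f : ℝ → ℝ) (hT : 0 < T)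
    (ha : 0 ≤ a) (hc : 0 ≤ c) (hβ : β ∈ Set.Ioc (0 : ℝ) 1) (hγ : γ ∈ Set.Ioc (0 : ℝ) 1)
    (hcont : ContinuousOn f (Set.Ioc 0 T))
    (hnonneg : ∀ t ∈ Set.Ioc (0 : ℝ) T, 0 ≤ f t)
    (hineq : ∀ t ∈ Set.Ioc (0 : ℝ) T,
      f t ≤ a * t ^ (β - 1) + c * ∫ s in Set.Ioo (0 : ℝ) t, (t - s) ^ (γ - 1) * f s) :
    ∃ C : ℝ, 0 < C ∧ ∀ t ∈ Set.Ioc (0 : ℝ) T, f t ≤ C * a * t ^ (β - 1) :=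
  singular_gronwall_general T a c β γ f hT ha hc hβ hγ hcont hineq
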